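/- For partial constructor terms t and t' with t linear and substitutions: if tη ⊑ t' then for each variable X occurring in t at (unique) position p, the subterm of t' at position p exists and Xη is below it in the information ordering. -/

import Mathlib

/-- Partial constructor terms over variables `V`, basic values `B`, and
constructor symbols `C`: `t ::= ⊥ | X | u | c(t₁,…,tₙ)`. -/
inductive PTerm (V B C : Type) : Type
  | bot : PTerm V B C
  | var (x : V) : PTerm V B C
  | val (u : B) : PTerm V B C
  | app (c : C) (args : List (PTerm V B C)) : PTerm V B C

/-- The information ordering `⊑` on partial terms: the least relation compatible with
constructor contexts such that `⊥ ⊑ t` for all `t`. -/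
inductive InfoLe {V B C : Type} : PTerm V B C → PTerm V B C → Prop
  | bot (t : PTerm V B C) : InfoLe .bot t
  | var (x : V) : InfoLe (.var x) (.var x)
  | val (u : B) : InfoLe (.val u) (.val u)
  | app (c : C) {ts ts' : List (PTerm V B C)} :
      List.Forall₂ InfoLe ts ts' → InfoLe (.app c ts) (.app c ts')

/-- Homomorphic application of a substitution to a partial term. -/
def PTerm.subst {V B C : Type} (σ : V → PTerm V B C) : PTerm V B C → PTerm V B C
  | .bot => .bot
  | .var x => σ x
  | .val u => .val u
  | .app c ts => .app c (ts.attach.map (fun t => PTerm.subst σ t.1))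
  decreasing_by
    have := List.sizeOf_lt_of_mem t.2
    simp only [PTerm.app.sizeOf_spec]
    omega

/-- `x` occurs in the term `t`. -/
inductive PTerm.Occurs {V B C : Type} (x : V) : PTerm V B C → Prop
  | var : PTerm.Occurs x (.var x)
  | app {c : C} {ts : List (PTerm V B C)} {t : PTerm V B C} :
      t ∈ ts → PTerm.Occurs x t → PTerm.Occurs x (.app c ts)

/-- The list of variable occurrences of a term, in left-to-right order. -/
def PTerm.varList {V B C : Type} : PTerm V B C → List V
  | .bot => []
  | .var x => [x]
  | .val _ => []
  | .app _ ts => ts.attach.flatMap (fun t => PTerm.varList t.1)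
  decreasing_by
    have := List.sizeOf_lt_of_mem t.2
    simp only [PTerm.app.sizeOf_spec]
    omega

/-- A term is linear if no variable occurs twice in it. -/
def PTerm.Linear {V B C : Type} (t : PTerm V B C) : Prop := t.varList.Nodup

/-- The subterm of `t` at position `p` (a sequence of argument indices), when defined. -/
def PTerm.subtermAt {V B C : Type} : PTerm V B C → List ℕ → Option (PTerm V B C)
  | t, [] => some t
  | .app _ ts, i :: p => (ts[i]?).bind (fun t => PTerm.subtermAt t p)
  | .bot, _ :: _ => none
  | .var _, _ :: _ => none
  | .val _, _ :: _ => none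
  termination_by _ p => p.length

/-! Taking the subterm at a position of `t` commutes with substitution, and `⊑` passes to the
subterms at every position defined in the smaller term; at the position of `x` in `t`, the
subterm of `tη` is `η x`. -/

theorem List.Forall₂.exists_of_getElem?_eq_some {α β : Type*} {R : α → β → Prop}
    {l : List α} {l' : List β} (h : List.Forall₂ R l l') {i : ℕ} {a : α} (ha : l[i]? = some a) :
    ∃ b, l'[i]? = some b ∧ R a b := by
  induction h generalizing i with
  | nil => simp at ha
  | cons hr _ ih =>
    cases i with
    | zero => simp_all
    | succ i => exact ih ha

namespace PTerm

variable {V B C : Type}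

@[simp]
theorem subtermAt_nil (t : PTerm V B C) : t.subtermAt [] = some t := by
  simp [subtermAt]

@[simp]
theorem subtermAt_app_cons (c : C) (ts : List (PTerm V B C)) (i : ℕ) (p : List ℕ) :
    (app c ts).subtermAt (i :: p) = ts[i]?.bind (·.subtermAt p) := by
  simp [subtermAt]

@[simp]
theorem subst_var (η : V → PTerm V B C) (x : V) : (var x).subst η = η x := by
  simp [subst]

@[simp]
theorem subst_app (η : V → PTerm V B C) (c : C) (ts : List (PTerm V B C)) :
    (app c ts).subst η = app c (ts.map (subst η)) := by
  simp [subst]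

theorem subtermAt_subst (η : V → PTerm V B C) :
    ∀ {p : List ℕ} {t r : PTerm V B C}, t.subtermAt p = some r →
      (t.subst η).subtermAt p = some (r.subst η)
  | [], t, r, h => by simp_all
  | i :: p, app c ts, r, h => by
    obtain ⟨ti, hti, hr⟩ := Option.bind_eq_some_iff.mp (by simpa using h)
    simp [hti, subtermAt_subst η hr]
  | _ :: _, bot, _, h | _ :: _, var _, _, h | _ :: _, val _, _, h => by simp [subtermAt] at h

end PTerm

theorem InfoLe.exists_subtermAt {V B C : Type} :
    ∀ {p : List ℕ} {u u' s : PTerm V B C}, InfoLe u u' → u.subtermAt p = some s →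
      ∃ s', u'.subtermAt p = some s' ∧ InfoLe s s'
  | [], u, u', s, hle, h => by
    obtain rfl : u = s := by simpa using h
    exact ⟨u', by simp, hle⟩
  | i :: p, .app c ts, u', s, hle, h => by
    obtain ⟨ti, hti, hs⟩ := Option.bind_eq_some_iff.mp (by simpa using h)
    obtain ⟨ts', _, hargs⟩ : ∃ ts', u' = .app c ts' ∧ List.Forall₂ InfoLe ts ts' := by
      cases hle with
      | app _ hargs => exact ⟨_, rfl, hargs⟩
    subst u'
    obtain ⟨ti', hti', hle_i⟩ := hargs.exists_of_getElem?_eq_some hti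
    obtain ⟨s', hs', hle_s⟩ := InfoLe.exists_subtermAt hle_i hs
    exact ⟨s', by simp [hti', hs'], hle_s⟩
  | _ :: _, .bot, _, _, _, h | _ :: _, .var _, _, _, _, h | _ :: _, .val _, _, _, _, h => by
    simp [PTerm.subtermAt] at h

theorem linear_subst_position_general {V B C : Type} (t t' : PTerm V B C)
    (η : V → PTerm V B C) (hle : InfoLe (t.subst η) t')
    (x : V) (p : List ℕ) (hocc : t.subtermAt p = some (.var x)) :
    ∃ s : PTerm V B C, t'.subtermAt p = some s ∧ InfoLe (η x) s := by
  simpa using hle.exists_subtermAt (PTerm.subtermAt_subst η hocc)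

/-- If `t` is linear and `tη ⊑ t'`, then for each variable `x` occurring in `t` at a
position `p`, the subterm of `t'` at position `p` exists and `η x` is below it in the
information ordering. -/
theorem linear_subst_position {V B C : Type} (t t' : PTerm V B C)
    (η : V → PTerm V B C) (hlin : t.Linear) (hle : InfoLe (t.subst η) t')
    (x : V) (p : List ℕ) (hocc : t.subtermAt p = some (.var x)) :
    ∃ s : PTerm V B C, t'.subtermAt p = some s ∧ InfoLe (η x) s :=
  linear_subst_position_general t t' η hle x p hocc
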